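/- arXiv:1412.6897 — 2 statements merged into one kernel-verified Lean document; each statement's English description precedes it below -/
import Mathlib

section
/- Let b > 0, R > 0, and ϱ = bR²/2. The eigenvalue ν_k = (1/k!) ∫_0^ϱ e^{−t} t^k dt of the operator P_0 𝟙_{B_R(0)} P_0 on the angular momentum basis satisfies ν_k = e^{−ϱ} ϱ^{k+1} / ((k+1)!) (1 + o(1)) as k → ∞; in particular ln ν_k = −k ln k + k(1 + ln ϱ) + O(ln k). -/
open MeasureTheory Asymptotics Filter

private lemma sum_log_one_add (n : ℕ) :
    ∑ i ∈ Finset.range n, Real.log (1 + (i : ℕ)) = Real.log (Nat.factorial n) := by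
  induction n with
  | zero => simp
  | succ n ih =>
    rw [Finset.sum_range_succ, ih, Nat.factorial_succ, Nat.cast_mul]
    rw [Real.log_mul (by positivity) (by exact_mod_cast Nat.factorial_pos n |>.ne')]
    push_cast
    ring

private lemma sum_log_shift (n : ℕ) :
    ∑ i ∈ Finset.range n, Real.log (1 + ((i + 1 : ℕ) : ℝ)) =
      Real.log (Nat.factorial (n + 1)) := by
  induction n with
  | zero => simp
  | succ n ih =>
    rw [Finset.sum_range_succ, ih, Nat.factorial_succ (n + 1), Nat.cast_mul]
    rw [Real.log_mul (by positivity) (by exact_mod_cast Nat.factorial_pos (n + 1) |>.ne')]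
    push_cast
    ring

private lemma log_monotoneOn (n : ℕ) : MonotoneOn Real.log (Set.Icc (1 : ℝ) (1 + n)) :=
  fun _ hx _ _ hxy => Real.log_le_log (by linarith [hx.1]) hxy

private lemma log_factorial_le (n : ℕ) :
    Real.log (Nat.factorial n) ≤ ((n : ℝ) + 1) * Real.log (n + 1) - n := by
  have h := (log_monotoneOn n).sum_le_integral
  rw [sum_log_one_add] at h
  have hint : ∫ x in (1 : ℝ)..(1 + n), Real.log x =
      ((n : ℝ) + 1) * Real.log (n + 1) - n := by
    rw [integral_log]
    simp only [Real.log_one, mul_zero, one_mul]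
    ring
  calc Real.log (Nat.factorial n) ≤ ∫ x in (1 : ℝ)..(1 + n), Real.log x := by
        convert h using 3 with i <;> (push_cast; try ring)
    _ = _ := hint

private lemma le_log_factorial (n : ℕ) :
    (n : ℝ) * Real.log (n + 1) - n ≤ Real.log (Nat.factorial n) := by
  have h := (log_monotoneOn n).integral_le_sum
  rw [sum_log_shift] at h
  have hint : ∫ x in (1 : ℝ)..(1 + n), Real.log x =
      ((n : ℝ) + 1) * Real.log (n + 1) - n := by
    rw [integral_log]
    simp only [Real.log_one, mul_zero, one_mul]
    ring
  rw [hint] at h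
  have hfs : Real.log (Nat.factorial (n + 1)) =
      Real.log (n + 1) + Real.log (Nat.factorial n) := by
    rw [Nat.factorial_succ, Nat.cast_mul,
      Real.log_mul (by positivity) (by exact_mod_cast Nat.factorial_pos n |>.ne')]
    push_cast; ring
  rw [hfs] at h
  linarith

private lemma n_mul_log_succ_sub_log (n : ℕ) :
    (n : ℝ) * (Real.log (n + 1) - Real.log n) ≤ 1 := by
  rcases Nat.eq_zero_or_pos n with h | h
  · simp [h]
  have hn : (0 : ℝ) < n := by exact_mod_cast h
  have hd : Real.log (n + 1) - Real.log n = Real.log (((n : ℝ) + 1) / n) := by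
    rw [Real.log_div (by positivity) (by positivity)]
  have hb : Real.log (((n : ℝ) + 1) / n) ≤ 1 / n := by
    have := Real.log_le_sub_one_of_pos (x := ((n : ℝ) + 1) / n) (by positivity)
    have : Real.log (((n : ℝ) + 1) / n) ≤ ((n : ℝ) + 1) / n - 1 := this
    have heq : ((n : ℝ) + 1) / n - 1 = 1 / n := by field_simp; ring
    linarith
  rw [hd]
  calc (n : ℝ) * Real.log (((n : ℝ) + 1) / n) ≤ (n : ℝ) * (1 / n) :=
        mul_le_mul_of_nonneg_left hb hn.le
    _ = 1 := by field_simp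

/-- `0 ≤ log n! - (n log n - n) ≤ log (n+1) + 1`. -/
private lemma log_factorial_bounds (n : ℕ) :
    (0 : ℝ) ≤ Real.log (Nat.factorial n) - ((n : ℝ) * Real.log n - n) ∧
      Real.log (Nat.factorial n) - ((n : ℝ) * Real.log n - n) ≤ Real.log (n + 1) + 1 := by
  have h1 := log_factorial_le n
  have h2 := le_log_factorial n
  have h3 := n_mul_log_succ_sub_log n
  have h4 : (n : ℝ) * Real.log n ≤ (n : ℝ) * Real.log (n + 1) := by
    rcases Nat.eq_zero_or_pos n with h | h
    · simp [h]
    exact mul_le_mul_of_nonneg_left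
      (Real.log_le_log (by exact_mod_cast h) (by linarith)) (by positivity)
  constructor
  · nlinarith
  · nlinarith

theorem disk_toeplitz_eigenvalue_asymptotics (b R : ℝ) (hb : 0 < b) (hR : 0 < R)
    (ρ : ℝ) (hρ : ρ = b * R ^ 2 / 2) (ν : ℕ → ℝ)
    (hν : ∀ k : ℕ, ν k =
      (1 / (Nat.factorial k : ℝ)) * ∫ t in Set.Ioc (0 : ℝ) ρ, Real.exp (-t) * t ^ k) :
    Tendsto
      (fun k : ℕ =>
        ν k / (Real.exp (-ρ) * ρ ^ (k + 1) / (Nat.factorial (k + 1) : ℝ)))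
      atTop (nhds 1) ∧
    (fun k : ℕ =>
        Real.log (ν k) + (k : ℝ) * Real.log k - (k : ℝ) * (1 + Real.log ρ))
      =O[atTop] (fun k : ℕ => Real.log k) := by
  have hρ0 : 0 < ρ := by rw [hρ]; positivity
  set I : ℕ → ℝ := fun k => ∫ t in Set.Ioc (0 : ℝ) ρ, Real.exp (-t) * t ^ k with hI
  -- integrability
  have hcont : ∀ k : ℕ, IntegrableOn (fun t : ℝ => Real.exp (-t) * t ^ k)
      (Set.Ioc (0 : ℝ) ρ) := fun k =>
    (Continuous.mul (Real.continuous_exp.comp continuous_neg) (continuous_pow k)).integrableOn_Ioc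
  have hpowint : ∀ k : ℕ, IntegrableOn (fun t : ℝ => t ^ k) (Set.Ioc (0 : ℝ) ρ) :=
    fun k => (continuous_pow k).integrableOn_Ioc
  have hpow : ∀ k : ℕ, (∫ t in Set.Ioc (0 : ℝ) ρ, t ^ k) = ρ ^ (k + 1) / (k + 1) := by
    intro k
    rw [← intervalIntegral.integral_of_le hρ0.le, integral_pow]
    simp
  -- lower bound for I k
  have hIlb : ∀ k : ℕ, Real.exp (-ρ) * (ρ ^ (k + 1) / (k + 1)) ≤ I k := by
    intro k
    have : Real.exp (-ρ) * (ρ ^ (k + 1) / (k + 1)) =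
        ∫ t in Set.Ioc (0 : ℝ) ρ, Real.exp (-ρ) * t ^ k := by
      rw [integral_const_mul, hpow]
    rw [this]
    refine setIntegral_mono_on ((hpowint k).const_mul _) (hcont k) measurableSet_Ioc ?_
    intro t ht
    have := Real.exp_le_exp.mpr (neg_le_neg ht.2)
    exact mul_le_mul_of_nonneg_right this (pow_nonneg ht.1.le k)
  -- crude upper bound for I k
  have hIub : ∀ k : ℕ, I k ≤ ρ ^ (k + 1) / (k + 1) := by
    intro k
    rw [← hpow k]
    refine setIntegral_mono_on (hcont k) (hpowint k) measurableSet_Ioc ?_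
    intro t ht
    have h1 : Real.exp (-t) ≤ 1 := Real.exp_le_one_iff.mpr (by linarith [ht.1])
    calc Real.exp (-t) * t ^ k ≤ 1 * t ^ k :=
          mul_le_mul_of_nonneg_right h1 (pow_nonneg ht.1.le k)
      _ = t ^ k := one_mul _
  -- refined upper bound
  set m : ℕ := ⌈ρ⌉₊ with hm
  have hmρ : ρ ≤ m := Nat.le_ceil ρ
  have hIref : ∀ k : ℕ, I (k + m) ≤
      Real.exp (-ρ) * ρ ^ m * (ρ ^ (k + 1) / (k + 1)) := by
    intro k
    have : Real.exp (-ρ) * ρ ^ m * (ρ ^ (k + 1) / (k + 1)) =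
        ∫ t in Set.Ioc (0 : ℝ) ρ, Real.exp (-ρ) * ρ ^ m * t ^ k := by
      rw [integral_const_mul, hpow]
    rw [this]
    refine setIntegral_mono_on (hcont _) ((hpowint k).const_mul _) measurableSet_Ioc ?_
    intro t ht
    have ht0 : 0 < t := ht.1
    have htρ : t ≤ ρ := ht.2
    -- key pointwise estimate : exp(-t) * t ^ m ≤ exp(-ρ) * ρ ^ m
    have hlog : Real.log (ρ / t) ≥ (ρ - t) / ρ := by
      have h1 := Real.log_le_sub_one_of_pos (x := t / ρ) (by positivity)
      have h2 : Real.log (t / ρ) = -Real.log (ρ / t) := by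
        rw [← Real.log_inv]; congr 1; field_simp
      rw [h2] at h1
      have : t / ρ - 1 = -((ρ - t) / ρ) := by field_simp; ring
      rw [this] at h1
      linarith
    have hdivnn : (0 : ℝ) ≤ (ρ - t) / ρ := div_nonneg (by linarith) hρ0.le
    have hlog0 : 0 ≤ Real.log (ρ / t) := le_trans hdivnn hlog
    have hkey : ρ - t ≤ (m : ℝ) * Real.log (ρ / t) := by
      calc ρ - t = ρ * ((ρ - t) / ρ) := by field_simp
        _ ≤ (m : ℝ) * Real.log (ρ / t) :=
            mul_le_mul hmρ hlog hdivnn (by positivity)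
    have hexp : Real.exp (ρ - t) ≤ (ρ / t) ^ m := by
      calc Real.exp (ρ - t) ≤ Real.exp ((m : ℝ) * Real.log (ρ / t)) :=
            Real.exp_le_exp.mpr hkey
        _ = (Real.exp (Real.log (ρ / t))) ^ m := Real.exp_nat_mul _ m
        _ = (ρ / t) ^ m := by rw [Real.exp_log (by positivity)]
    have hpt : Real.exp (-t) * t ^ m ≤ Real.exp (-ρ) * ρ ^ m := by
      have h1 : Real.exp (-t) = Real.exp (-ρ) * Real.exp (ρ - t) := by
        rw [← Real.exp_add]; ring_nf
      rw [h1, mul_assoc]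
      refine mul_le_mul_of_nonneg_left ?_ (Real.exp_pos _).le
      calc Real.exp (ρ - t) * t ^ m ≤ (ρ / t) ^ m * t ^ m :=
            mul_le_mul_of_nonneg_right hexp (by positivity)
        _ = ρ ^ m := by rw [div_pow, div_mul_cancel₀]; positivity
    calc Real.exp (-t) * t ^ (k + m) = Real.exp (-t) * t ^ m * t ^ k := by
          rw [pow_add]; ring
      _ ≤ Real.exp (-ρ) * ρ ^ m * t ^ k :=
          mul_le_mul_of_nonneg_right hpt (by positivity)
  -- positivity facts
  have hfacpos : ∀ k : ℕ, (0 : ℝ) < Nat.factorial k := fun k => by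
    exact_mod_cast Nat.factorial_pos k
  have hDpos : ∀ k : ℕ, (0 : ℝ) <
      Real.exp (-ρ) * ρ ^ (k + 1) / (Nat.factorial (k + 1) : ℝ) := by
    intro k
    have := hfacpos (k + 1)
    positivity
  have hIpos : ∀ k : ℕ, 0 < I k := fun k =>
    lt_of_lt_of_le (by positivity) (hIlb k)
  have hνI : ∀ k : ℕ, ν k = I k / Nat.factorial k := by
    intro k; rw [hν k, one_div, inv_mul_eq_div]
  have hνpos : ∀ k : ℕ, 0 < ν k := by
    intro k; rw [hνI k]; exact div_pos (hIpos k) (hfacpos k)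
  have hfacsucc : ∀ k : ℕ, ((Nat.factorial (k + 1) : ℝ)) =
      ((k : ℝ) + 1) * Nat.factorial k := by
    intro k; rw [Nat.factorial_succ]; push_cast; ring
  -- lower bound on the ratio
  have hlower : ∀ k : ℕ, 1 ≤ ν k /
      (Real.exp (-ρ) * ρ ^ (k + 1) / (Nat.factorial (k + 1) : ℝ)) := by
    intro k
    rw [one_le_div (hDpos k), hνI k, hfacsucc k]
    rw [div_le_div_iff₀ (by have := hfacpos (k+1); rw [hfacsucc k] at this; positivity)
      (hfacpos k)]
    have := hIlb k
    have hkk : (0:ℝ) < (k:ℝ) + 1 := by positivity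
    have h2 : Real.exp (-ρ) * ρ ^ (k + 1) / ((k:ℝ) + 1) ≤ I k := by
      calc Real.exp (-ρ) * ρ ^ (k + 1) / ((k:ℝ) + 1)
          = Real.exp (-ρ) * (ρ ^ (k + 1) / ((k:ℝ) + 1)) := by ring
        _ ≤ I k := hIlb k
    calc Real.exp (-ρ) * ρ ^ (k + 1) * Nat.factorial k
        = (Real.exp (-ρ) * ρ ^ (k + 1) / ((k:ℝ) + 1)) * (((k:ℝ) + 1) * Nat.factorial k) := by
          field_simp
      _ ≤ I k * (((k:ℝ) + 1) * Nat.factorial k) :=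
          mul_le_mul_of_nonneg_right h2 (by have := hfacpos k; positivity)
  -- upper bound on the ratio for large k
  have hupper : ∀ k : ℕ, m ≤ k → ν k /
      (Real.exp (-ρ) * ρ ^ (k + 1) / (Nat.factorial (k + 1) : ℝ)) ≤
        ((k : ℝ) + 1) / ((k : ℝ) + 1 - m) := by
    intro k hk
    have hkm : (0 : ℝ) < (k : ℝ) + 1 - m := by
      have : (m : ℝ) ≤ k := by exact_mod_cast hk
      linarith
    rw [div_le_div_iff₀ (hDpos k) hkm]
    have hIk : I k ≤ Real.exp (-ρ) * ρ ^ (k + 1) / ((k : ℝ) - m + 1) := by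
      have h := hIref (k - m)
      rw [Nat.sub_add_cancel hk] at h
      have hcast : ((k - m : ℕ) : ℝ) = (k : ℝ) - m := by
        rw [Nat.cast_sub hk]
      calc I k ≤ Real.exp (-ρ) * ρ ^ m * (ρ ^ (k - m + 1) / ((k - m : ℕ) + 1)) := h
        _ = Real.exp (-ρ) * ρ ^ (k + 1) / ((k : ℝ) - m + 1) := by
            have hps : ρ ^ (k + 1) = ρ ^ m * ρ ^ (k - m + 1) := by
              rw [← pow_add]; congr 1; omega
            rw [hcast, hps]; ring
    have hterm : (k : ℝ) - m + 1 = (k : ℝ) + 1 - m := by ring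
    rw [hterm] at hIk
    have key : ν k ≤ Real.exp (-ρ) * ρ ^ (k + 1) / (Nat.factorial k * ((k : ℝ) + 1 - m)) := by
      rw [hνI k, div_le_div_iff₀ (hfacpos k) (by have := hfacpos k; positivity)]
      calc I k * (Nat.factorial k * ((k : ℝ) + 1 - m))
          = (I k * ((k : ℝ) + 1 - m)) * Nat.factorial k := by ring
        _ ≤ (Real.exp (-ρ) * ρ ^ (k + 1) / ((k : ℝ) + 1 - m) * ((k : ℝ) + 1 - m)) *
              Nat.factorial k := by
            have h1 : I k * ((k : ℝ) + 1 - m) ≤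
                Real.exp (-ρ) * ρ ^ (k + 1) / ((k : ℝ) + 1 - m) * ((k : ℝ) + 1 - m) :=
              mul_le_mul_of_nonneg_right hIk hkm.le
            exact mul_le_mul_of_nonneg_right h1 (hfacpos k).le
        _ = Real.exp (-ρ) * ρ ^ (k + 1) * Nat.factorial k := by
            field_simp
    calc ν k * ((k : ℝ) + 1 - m)
        ≤ Real.exp (-ρ) * ρ ^ (k + 1) / (Nat.factorial k * ((k : ℝ) + 1 - m)) *
            ((k : ℝ) + 1 - m) := mul_le_mul_of_nonneg_right key hkm.le
      _ = Real.exp (-ρ) * ρ ^ (k + 1) / (Nat.factorial k : ℝ) := by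
          field_simp
      _ = ((k : ℝ) + 1) * (Real.exp (-ρ) * ρ ^ (k + 1) / (Nat.factorial (k + 1) : ℝ)) := by
          rw [hfacsucc k]; field_simp
  constructor
  · -- squeeze
    have hub_tendsto : Tendsto (fun k : ℕ => ((k : ℝ) + 1) / ((k : ℝ) + 1 - m))
        atTop (nhds 1) := by
      have h1 : Tendsto (fun k : ℕ => (k : ℝ) + 1 - m) atTop atTop :=
        Tendsto.congr (fun k => by ring)
          (tendsto_atTop_add_const_right atTop ((1 : ℝ) - m) tendsto_natCast_atTop_atTop)
      have h2 : Tendsto (fun k : ℕ => (m : ℝ) / ((k : ℝ) + 1 - m)) atTop (nhds 0) :=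
        Tendsto.div_atTop tendsto_const_nhds h1
      have h3 : Tendsto (fun k : ℕ => 1 + (m : ℝ) / ((k : ℝ) + 1 - m)) atTop (nhds 1) := by
        simpa using tendsto_const_nhds.add h2
      refine h3.congr' ?_
      filter_upwards [h1.eventually_gt_atTop 0] with k hk
      field_simp
      ring
    refine tendsto_of_tendsto_of_tendsto_of_le_of_le' tendsto_const_nhds hub_tendsto
      (Eventually.of_forall hlower) ?_
    filter_upwards [eventually_ge_atTop m] with k hk
    exact hupper k hk
  · -- logarithmic asymptotics
    rw [isBigO_iff]
    refine ⟨ρ + |Real.log ρ| + 5, ?_⟩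
    filter_upwards [eventually_ge_atTop 3] with k hk
    have hk1 : (1 : ℝ) ≤ k := by exact_mod_cast (by omega : 1 ≤ k)
    have hk3 : (3 : ℝ) ≤ k := by exact_mod_cast hk
    have hlogk : 1 ≤ Real.log k := by
      rw [Real.le_log_iff_exp_le (by positivity)]
      have := Real.exp_one_lt_d9
      linarith
    have hlogk0 : 0 ≤ Real.log k := by linarith
    have hlog2 : Real.log ((k : ℝ) + 1) ≤ 2 * Real.log k := by
      have h1 : (k : ℝ) + 1 ≤ (k : ℝ) ^ 2 := by nlinarith
      calc Real.log ((k : ℝ) + 1) ≤ Real.log ((k : ℝ) ^ 2) :=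
            Real.log_le_log (by positivity) h1
        _ = 2 * Real.log k := by rw [Real.log_pow]; push_cast; ring
    have hlogν : Real.log (ν k) = Real.log (I k) - Real.log (Nat.factorial k) := by
      rw [hνI k, Real.log_div (hIpos k).ne' (hfacpos k).ne']
    have hLub : Real.log (I k) ≤ ((k : ℝ) + 1) * Real.log ρ - Real.log ((k : ℝ) + 1) := by
      have h := Real.log_le_log (hIpos k) (hIub k)
      rw [Real.log_div (by positivity) (by positivity), Real.log_pow] at h
      calc Real.log (I k) ≤ ((k + 1 : ℕ) : ℝ) * Real.log ρ - Real.log ((k : ℝ) + 1) := h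
        _ = ((k : ℝ) + 1) * Real.log ρ - Real.log ((k : ℝ) + 1) := by push_cast; ring
    have hLlb : -ρ + ((k : ℝ) + 1) * Real.log ρ - Real.log ((k : ℝ) + 1) ≤
        Real.log (I k) := by
      have h := Real.log_le_log (by positivity :
        (0 : ℝ) < Real.exp (-ρ) * (ρ ^ (k + 1) / ((k : ℝ) + 1))) (hIlb k)
      rw [Real.log_mul (Real.exp_ne_zero _) (by positivity), Real.log_exp,
        Real.log_div (by positivity) (by positivity), Real.log_pow] at h
      calc -ρ + ((k : ℝ) + 1) * Real.log ρ - Real.log ((k : ℝ) + 1)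
          = -ρ + (((k + 1 : ℕ) : ℝ) * Real.log ρ - Real.log ((k : ℝ) + 1)) := by
            push_cast; ring
        _ ≤ Real.log (I k) := h
    obtain ⟨hB1, hB2⟩ := log_factorial_bounds k
    have habs1 : Real.log ρ ≤ |Real.log ρ| := le_abs_self _
    have habs2 : -|Real.log ρ| ≤ Real.log ρ := neg_abs_le _
    rw [Real.norm_eq_abs, Real.norm_eq_abs, abs_of_nonneg hlogk0]
    rw [abs_le]
    constructor
    · nlinarith
    · nlinarith
end

section
/- Let {a_k}_{k≥0} be a nonincreasing sequence of positive reals with ln a_k = −k ln k (1 + o(1)) as k → ∞, and define N(λ) = #{k : a_k > λ} for λ > 0. Then N(λ) = (|ln λ| / ln|ln λ|)(1 + o(1)) as λ ↓ 0. -/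
open Filter Real

private lemma log_le_ev (c : ℝ) (hc : 0 < c) : ∀ᶠ x : ℝ in atTop, Real.log x ≤ c * x := by
  have h := Real.isLittleO_log_id_atTop.bound hc
  filter_upwards [h, eventually_ge_atTop (0:ℝ)] with x hx hx0
  have : Real.log x ≤ ‖Real.log x‖ := le_abs_self _
  simpa [Real.norm_eq_abs, abs_of_nonneg hx0] using this.trans hx

private lemma tendsto_div_log : Tendsto (fun x : ℝ => x / Real.log x) atTop atTop := by
  rw [tendsto_atTop]
  intro C
  have hM : (0:ℝ) < max C 1 := lt_of_lt_of_le one_pos (le_max_right _ _)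
  have hc : (0:ℝ) < 1 / max C 1 := by positivity
  filter_upwards [log_le_ev _ hc, Real.tendsto_log_atTop.eventually_ge_atTop 1] with x h1 h2
  have hx : 0 < Real.log x := lt_of_lt_of_le one_pos h2
  have hle : max C 1 * Real.log x ≤ x := by
    have := mul_le_mul_of_nonneg_left h1 hM.le
    calc max C 1 * Real.log x ≤ max C 1 * (1 / max C 1 * x) := this
      _ = x := by field_simp
  calc C ≤ max C 1 := le_max_left _ _
    _ ≤ x / Real.log x := (le_div_iff₀ hx).2 hle

private lemma char_lemma (a : ℕ → ℝ) (ha_mono : Antitone a)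
    (halim : Tendsto a atTop (nhds 0)) (N : ℝ → ℕ)
    (hN : ∀ l : ℝ, N l = Nat.card {k : ℕ | l < a k}) (l : ℝ) (hl : 0 < l) :
    ∀ k : ℕ, (k < N l ↔ l < a k) := by
  have hne : {k : ℕ | a k ≤ l}.Nonempty := by
    obtain ⟨k, hk⟩ := (halim.eventually_lt_const hl).exists
    exact ⟨k, hk.le⟩
  set n := sInf {k : ℕ | a k ≤ l} with hn
  have hn_mem : a n ≤ l := Nat.sInf_mem hne
  have hiff : ∀ k, l < a k ↔ k < n := by
    intro k
    constructor
    · intro hk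
      by_contra h
      push_neg at h
      exact absurd (lt_of_lt_of_le hk (ha_mono h)) (not_lt.2 hn_mem)
    · intro hk
      have := Nat.notMem_of_lt_sInf (hn ▸ hk)
      simpa [not_le] using this
  have hset : {k : ℕ | l < a k} = Set.Iio n := by
    ext k; simpa using hiff k
  have hNl : N l = n := by
    rw [hN, hset, Nat.card_eq_card_toFinset]
    simp
  intro k
  rw [hNl, hiff k]

set_option maxHeartbeats 2000000 in
theorem counting_function_superexponential (a : ℕ → ℝ) (ha_pos : ∀ k, 0 < a k)
    (ha_mono : Antitone a) (e : ℕ → ℝ) (he : Tendsto e atTop (nhds 0))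
    (hlog : ∀ᶠ k : ℕ in atTop,
      Real.log (a k) = -((k : ℝ) * Real.log k) * (1 + e k))
    (N : ℝ → ℕ) (hN : ∀ l : ℝ, N l = Nat.card {k : ℕ | l < a k}) :
    Tendsto (fun l : ℝ => (N l : ℝ) / (|Real.log l| / Real.log |Real.log l|))
      (nhdsWithin 0 (Set.Ioi 0)) (nhds 1) := by
  -- a tends to 0
  have hklog : Tendsto (fun k : ℕ => -((k:ℝ) * Real.log k) * (1 + e k)) atTop atBot := by
    have h1 : Tendsto (fun k : ℕ => (k:ℝ) * Real.log k) atTop atTop :=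
      tendsto_natCast_atTop_atTop.atTop_mul_atTop₀
        (Real.tendsto_log_atTop.comp tendsto_natCast_atTop_atTop)
    have h2 : Tendsto (fun k : ℕ => 1 + e k) atTop (nhds 1) := by
      simpa using tendsto_const_nhds.add he
    have h3 : Tendsto (fun k : ℕ => ((k:ℝ) * Real.log k) * (1 + e k)) atTop atTop :=
      h1.atTop_mul_pos one_pos h2
    have h4 := tendsto_neg_atTop_atBot.comp h3
    refine h4.congr fun k => ?_
    simp only [Function.comp_apply]; ring
  have hloga : Tendsto (fun k => Real.log (a k)) atTop atBot :=
    Tendsto.congr' (hlog.mono fun k h => h.symm) hklog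
  have halim : Tendsto a atTop (nhds 0) := by
    have h5 := Real.tendsto_exp_atBot.comp hloga
    refine h5.congr fun k => ?_
    simp only [Function.comp_apply, Real.exp_log (ha_pos k)]
  have hchar := char_lemma a ha_mono halim N hN
  set F := nhdsWithin (0:ℝ) (Set.Ioi 0) with hF
  have hLtop : Tendsto (fun l : ℝ => -Real.log l) F atTop :=
    tendsto_neg_atBot_atTop.comp Real.tendsto_log_nhdsGT_zero
  -- tendsto of the comparison function
  have hgtop : Tendsto (fun l : ℝ => |Real.log l| / Real.log |Real.log l|) F atTop := by
    have habs : Tendsto (fun l : ℝ => |Real.log l|) F atTop := by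
      refine hLtop.congr' ?_
      filter_upwards [hLtop.eventually_ge_atTop 1] with l hl
      have : Real.log l < 0 := by linarith
      rw [abs_of_neg this]
    exact tendsto_div_log.comp habs
  -- main two-sided bound
  have main : ∀ ε : ℝ, 0 < ε → ε ≤ 1/2 → ∀ᶠ l in F,
      (1 - ε) * (|Real.log l| / Real.log |Real.log l|) ≤ (N l : ℝ) ∧
      (N l : ℝ) ≤ (1 + ε) * (|Real.log l| / Real.log |Real.log l|) + 1 := by
    intro ε hε hε2
    obtain ⟨K, hK⟩ : ∃ K : ℕ, ∀ k, K ≤ k → |e k| ≤ ε/4 ∧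
        Real.log (a k) = -((k:ℝ) * Real.log k) * (1 + e k) := by
      have h1 : ∀ᶠ k in atTop, |e k| ≤ ε/4 := by
        have := he.eventually (Metric.closedBall_mem_nhds (0:ℝ) (by positivity : (0:ℝ) < ε/4))
        filter_upwards [this] with k hk
        simpa [Real.dist_eq] using hk
      exact eventually_atTop.mp (h1.and hlog)
    have E1 := hLtop.eventually (log_le_ev (ε/8) (by positivity))
    have E2 := hLtop.eventually
      (Real.tendsto_log_atTop.eventually (log_le_ev (ε/4) (by positivity)))
    have E3 := hLtop.eventually (tendsto_div_log.eventually_ge_atTop (max (2*(K:ℝ)+2) 2))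
    have E4 := hLtop.eventually (eventually_ge_atTop (Real.exp 2))
    filter_upwards [E1, E2, E3, E4, eventually_mem_nhdsWithin] with l h1 h2 h3 h4 hmem
    have hl0 : (0:ℝ) < l := hmem
    set L : ℝ := -Real.log l with hL
    have hexp2 : (2:ℝ) ≤ Real.exp 2 := by nlinarith [Real.add_one_le_exp 2]
    have hL2 : 2 ≤ L := le_trans hexp2 h4
    have hL0 : (0:ℝ) < L := by linarith
    have hlogl_neg : Real.log l < 0 := by simp only [hL] at hL2 ⊢; linarith
    have habs : |Real.log l| = L := abs_of_neg hlogl_neg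
    have hlogL2 : 2 ≤ Real.log L := (Real.le_log_iff_exp_le hL0).2 h4
    set G : ℝ := L / Real.log L with hGdef
    have hGpos : 0 < G := div_pos hL0 (by linarith)
    have hGexpr : |Real.log l| / Real.log |Real.log l| = G := by rw [habs]
    have hG2K : 2*(K:ℝ) + 2 ≤ G := le_trans (le_max_left _ _) h3
    have hG2 : 2 ≤ G := le_trans (le_max_right _ _) h3
    have hGL : G * Real.log L = L := div_mul_cancel₀ _ (by linarith)
    have hGleL : G ≤ L/2 := by
      rw [hGdef, div_le_div_iff₀ (by linarith) (by norm_num)]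
      nlinarith [mul_nonneg hL0.le (show (0:ℝ) ≤ Real.log L - 2 by linarith)]
    have heG : 0 ≤ ε * G := mul_nonneg hε.le hGpos.le
    have h12G : 0 ≤ (1/2 - ε) * G := mul_nonneg (by linarith) hGpos.le
    rw [hGexpr]
    constructor
    · -- lower bound
      set m : ℕ := ⌈(1-ε)*G⌉₊ with hm
      have hm_lb : (1-ε)*G ≤ (m:ℝ) := Nat.le_ceil _
      have hm_nn : 0 ≤ (1-ε)*G := mul_nonneg (by linarith) hGpos.le
      have hm_ub : (m:ℝ) ≤ (1-ε)*G + 1 := (Nat.ceil_lt_add_one hm_nn).le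
      have hmK : K ≤ m := by
        have : (K:ℝ) ≤ (m:ℝ) := by nlinarith
        exact_mod_cast this
      have hm1 : (1:ℝ) ≤ (m:ℝ) := by nlinarith
      obtain ⟨hem, hloga_m⟩ := hK m hmK
      have hmL : (m:ℝ) ≤ L := by nlinarith
      have hlogm_le : Real.log m ≤ Real.log L := Real.log_le_log (by linarith) hmL
      have hlogm_nonneg : 0 ≤ Real.log (m:ℝ) := Real.log_nonneg hm1
      have hem1 : 1 + e m ≤ 1 + ε/4 := by
        have := (abs_le.1 hem).2; linarith
      have hem2 : 0 ≤ 1 + e m := by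
        have := (abs_le.1 hem).1; linarith
      have key : (m:ℝ) * Real.log m * (1 + e m) < L := by
        have s1 : (m:ℝ) * Real.log m ≤ ((1-ε)*G + 1) * Real.log L :=
          mul_le_mul hm_ub hlogm_le hlogm_nonneg (by linarith)
        have t1 : (m:ℝ) * Real.log m * (1 + e m) ≤ (m:ℝ) * Real.log m * (1 + ε/4) :=
          mul_le_mul_of_nonneg_left hem1 (mul_nonneg (by linarith) hlogm_nonneg)
        have t2 : (m:ℝ) * Real.log m * (1 + ε/4) ≤ ((1-ε)*G + 1) * Real.log L * (1 + ε/4) :=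
          mul_le_mul_of_nonneg_right s1 (by linarith)
        have s3 : ((1-ε)*G + 1) * Real.log L * (1 + ε/4)
            = ((1-ε)*L + Real.log L) * (1 + ε/4) := by
          rw [add_mul, one_mul, mul_assoc, hGL]
        have hb : ((1-ε)*L + Real.log L) * (1 + ε/4)
            ≤ ((1-ε)*L + ε/8*L) * (1 + ε/4) :=
          mul_le_mul_of_nonneg_right (by linarith) (by linarith)
        have hc : ((1-ε)*L + ε/8*L) * (1 + ε/4) < L := by
          nlinarith [mul_pos hε hL0, mul_nonneg (mul_nonneg hε.le hε.le) hL0.le]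
        linarith
      have hlt : l < a m := by
        have h5 : Real.log l < Real.log (a m) := by
          rw [hloga_m]
          have hrw : -((m:ℝ) * Real.log m) * (1 + e m)
              = -((m:ℝ) * Real.log m * (1 + e m)) := by ring
          have hLl : Real.log l = -L := by rw [hL]; ring
          rw [hrw, hLl]
          linarith
        calc l = Real.exp (Real.log l) := (Real.exp_log hl0).symm
          _ < Real.exp (Real.log (a m)) := Real.exp_lt_exp.2 h5
          _ = a m := Real.exp_log (ha_pos m)
      have hmN : m < N l := (hchar l hl0 m).2 hlt
      have : (m:ℝ) ≤ (N l : ℝ) := by exact_mod_cast hmN.le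
      linarith
    · -- upper bound
      set p : ℕ := ⌈(1+ε)*G⌉₊ with hp
      have hp_lb : (1+ε)*G ≤ (p:ℝ) := Nat.le_ceil _
      have hpK : K ≤ p := by
        have : (K:ℝ) ≤ (p:ℝ) := by nlinarith
        exact_mod_cast this
      have hp1 : (1:ℝ) ≤ (p:ℝ) := by nlinarith
      obtain ⟨hep, hloga_p⟩ := hK p hpK
      have hGlep : G ≤ (p:ℝ) := by nlinarith
      have hlogp_ge : Real.log G ≤ Real.log p := Real.log_le_log hGpos hGlep
      have hlogG : Real.log G = Real.log L - Real.log (Real.log L) :=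
        Real.log_div (by linarith) (by linarith)
      have hlogG_ge : (1 - ε/4) * Real.log L ≤ Real.log G := by
        rw [hlogG]; nlinarith [mul_nonneg hε.le (show (0:ℝ) ≤ Real.log L by linarith)]
      have hep1 : 1 - ε/4 ≤ 1 + e p := by
        have := (abs_le.1 hep).1; linarith
      have key2 : L ≤ (p:ℝ) * Real.log p * (1 + e p) := by
        have s1 : (1+ε)*G * ((1 - ε/4) * Real.log L) ≤ (p:ℝ) * Real.log p :=
          mul_le_mul hp_lb (le_trans hlogG_ge hlogp_ge)
            (mul_nonneg (by linarith) (by linarith)) (by positivity)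
        have s2 : (1+ε)*G * ((1 - ε/4) * Real.log L) = (1+ε)*(1-ε/4)*L := by
          rw [show (1+ε)*G * ((1 - ε/4) * Real.log L)
            = (1+ε)*(1-ε/4)*(G * Real.log L) by ring, hGL]
        have s3 : (1+ε)*(1-ε/4)*L ≤ (p:ℝ) * Real.log p := by rw [← s2]; exact s1
        have hplogp : 0 ≤ (p:ℝ) * Real.log p :=
          mul_nonneg (by linarith) (Real.log_nonneg hp1)
        have s4 : (1+ε)*(1-ε/4)*L * (1 - ε/4) ≤ (p:ℝ) * Real.log p * (1 + e p) := by
          calc (1+ε)*(1-ε/4)*L * (1 - ε/4) ≤ (p:ℝ) * Real.log p * (1 - ε/4) :=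
                mul_le_mul_of_nonneg_right s3 (by linarith)
            _ ≤ (p:ℝ) * Real.log p * (1 + e p) := mul_le_mul_of_nonneg_left hep1 hplogp
        have coef : (1:ℝ) ≤ (1+ε)*(1-ε/4)*(1-ε/4) := by
          nlinarith [mul_nonneg hε.le hε.le, mul_nonneg (mul_nonneg hε.le hε.le) hε.le]
        have h6 : (1:ℝ)*L ≤ (1+ε)*(1-ε/4)*(1-ε/4)*L :=
          mul_le_mul_of_nonneg_right coef hL0.le
        nlinarith [s4, h6]
      have hle : a p ≤ l := by
        have h5 : Real.log (a p) ≤ Real.log l := by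
          rw [hloga_p]
          have hrw : -((p:ℝ) * Real.log p) * (1 + e p)
              = -((p:ℝ) * Real.log p * (1 + e p)) := by ring
          have hLl : Real.log l = -L := by rw [hL]; ring
          rw [hrw, hLl]
          linarith
        calc a p = Real.exp (Real.log (a p)) := (Real.exp_log (ha_pos p)).symm
          _ ≤ Real.exp (Real.log l) := Real.exp_le_exp.2 h5
          _ = l := Real.exp_log hl0
      have hNp : N l ≤ p := by
        by_contra h
        push_neg at h
        exact absurd ((hchar l hl0 p).1 h) (not_lt.2 hle)
      have hcast : (N l : ℝ) ≤ (p:ℝ) := by exact_mod_cast hNp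
      have hp_ub : (p:ℝ) ≤ (1+ε)*G + 1 :=
        (Nat.ceil_lt_add_one (mul_nonneg (by linarith) hGpos.le)).le
      linarith
  -- conclude
  rw [Metric.tendsto_nhds]
  intro ε₀ hε₀
  set ε : ℝ := min (ε₀/4) (1/2) with hε
  have hε1 : 0 < ε := lt_min (by positivity) (by norm_num)
  have hε2 : ε ≤ 1/2 := min_le_right _ _
  have hε3 : ε ≤ ε₀/4 := min_le_left _ _
  filter_upwards [main ε hε1 hε2, hgtop.eventually_ge_atTop (max (4/ε₀) 1)] with l hml hg
  obtain ⟨hlow, hup⟩ := hml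
  set g : ℝ := |Real.log l| / Real.log |Real.log l| with hgdef
  have hg1 : (1:ℝ) ≤ g := le_trans (le_max_right _ _) hg
  have hg0 : 0 < g := by linarith
  have hg4 : 4/ε₀ ≤ g := le_trans (le_max_left _ _) hg
  have hinv : 1/g ≤ ε₀/4 := by
    rw [div_le_div_iff₀ hg0 (by norm_num)]
    rw [div_le_iff₀ hε₀] at hg4
    nlinarith
  have hdiv1 : 1 - ε ≤ (N l : ℝ)/g := (le_div_iff₀ hg0).2 (by linarith)
  have hdiv2 : (N l : ℝ)/g ≤ (1 + ε) + 1/g := by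
    rw [div_le_iff₀ hg0, add_mul]
    have hcancel : 1/g*g = 1 := one_div_mul_cancel (ne_of_gt hg0)
    rw [hcancel]
    linarith
  rw [Real.dist_eq, abs_lt]
  constructor
  · linarith
  · linarith
end
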